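/- (Characterization of globally calibrated curves) Let α ∈ ℝ and let γ : ℝ → ℝⁿ be absolutely continuous. Then γ is a globally calibrated curve of u_α⁻ if and only if for all a < b one has ∫_a^b e^{F(τ)} (L(γ(τ),γ'(τ),τ) + α) dτ = inf { ∫_a^b e^{F(τ)} (L(η(τ),η'(τ),τ) + α) dτ : η : [a,b] → ℝⁿ absolutely continuous, η(a) − γ(a) ∈ ℤⁿ, η(b) − γ(b) ∈ ℤⁿ }. -/

import Mathlib

/-!
Write `V(x,t) = e^{F t} u_α⁻(x,t)`, the infimum of the actions `∫_{-∞}^t e^F (L + α)` of curves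
ending at `(x,t)`. Concatenating curves gives the dynamic programming inequality
`V(η t, t) ≤ V(η s, s) + ∫_s^t e^F (L(η,η') + α)` for every curve `η`, and `V` is `ℤⁿ`-periodic
in `x`. With calibration, this shows that `γ` minimizes among curves whose endpoints agree with
those of `γ` modulo `ℤⁿ`.

Conversely, let `ξ` be any curve ending at `(γ t₂, t₂)`. At a very negative time `a`, build a
competitor on `[a, t₂]`: a unit-time straight segment from `γ a + k` to `ξ (a + 1)`, with `k ∈ ℤⁿ`
chosen so that the velocity lies in `[0,1]ⁿ`, followed by `ξ`. Comparing `γ` with this competitor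
on `[a, t₂]` and using dynamic programming gives
`V(γ t₁, t₁) + ∫_{t₁}^{t₂} e^F (L(γ,γ') + α) ≤ action(ξ) + (M - c) ∫_{-∞}^{a+1} e^F`.
Here `c ≤ L` everywhere and `M` bounds `L` on velocities in `[0,1]ⁿ`; this bound exists by
periodicity and compactness. Since `F t ≤ [f] t + B`, `e^F` is integrable on half-lines, so the
error term vanishes as `a → -∞`.
-/

open MeasureTheory Real Filter
open scoped RealInnerProductSpace

noncomputable section

/-- `ℝⁿ` with the Euclidean norm. -/
abbrev Evec (n : ℕ) : Type := EuclideanSpace ℝ (Fin n)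

/-- The vector of `Evec n` with integer coordinates `k`. -/
def intVec {n : ℕ} (k : Fin n → ℤ) : Evec n := WithLp.toLp 2 (fun i => (k i : ℝ))

/-- `γ` is absolutely continuous on the interval `S` with derivative `γ'`:
on any subinterval of `S` it is the indefinite integral of the locally
integrable function `γ'`. -/
def ACOn {n : ℕ} (γ γ' : ℝ → Evec n) (S : Set ℝ) : Prop :=
  ∀ a ∈ S, ∀ b ∈ S,
    IntervalIntegrable γ' MeasureTheory.volume a b ∧ γ b = γ a + ∫ τ in a..b, γ' τ

/-- The set of (finite) actions `∫_{-∞}^t e^{F(s)-F(t)} (L + α)` of admissible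
absolutely continuous curves `γ : (-∞, t] → ℝⁿ` with `γ t = x`. -/
def wkSet {n : ℕ} (F : ℝ → ℝ) (L : Evec n → Evec n → ℝ → ℝ) (α : ℝ)
    (x : Evec n) (t : ℝ) : Set ℝ :=
  { r | ∃ γ γ' : ℝ → Evec n, ACOn γ γ' (Set.Iic t) ∧ γ t = x ∧
      MeasureTheory.IntegrableOn
        (fun s => Real.exp (F s - F t) * (L (γ s) (γ' s) s + α)) (Set.Iic t) ∧
      r = ∫ s in Set.Iic t, Real.exp (F s - F t) * (L (γ s) (γ' s) s + α) }

/-- The weak KAM solution `u_α⁻(x,t)`. -/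
def uWK {n : ℕ} (F : ℝ → ℝ) (L : Evec n → Evec n → ℝ → ℝ) (α : ℝ)
    (x : Evec n) (t : ℝ) : ℝ :=
  sInf (wkSet F L α x t)

open Set Topology
open scoped Interval Pointwise

section PeriodicPrimitive

lemma exists_primitive_le_mean_mul_add {f : ℝ → ℝ} {T : ℝ} (hf : Continuous f)
    (hper : Function.Periodic f T) (hT : T ≠ 0) :
    ∃ B, ∀ s, ∫ τ in (0:ℝ)..s, f τ ≤ (∫ τ in (0:ℝ)..T, f τ) / T * s + B := by
  set G : ℝ → ℝ := fun s => (∫ τ in (0:ℝ)..s, f τ) - (∫ τ in (0:ℝ)..T, f τ) / T * s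
  have hG : Function.Periodic G T := fun s => by
    simp only [G, hper.intervalIntegral_add_eq_add 0 s hf.intervalIntegrable, zero_add]
    field_simp
    ring
  have hGc : Continuous G :=
    (intervalIntegral.continuous_primitive hf.intervalIntegrable 0).sub (by fun_prop)
  obtain ⟨B, hB⟩ := (hG.isBounded_of_continuous hT hGc).bddAbove
  exact ⟨B, fun s => by linarith [hB (mem_range_self s)]⟩

lemma integrableOn_exp_Iic_of_le_mul_add {F : ℝ → ℝ} {m B : ℝ} (hm : 0 < m)
    (hFc : Continuous F) (hFB : ∀ s, F s ≤ m * s + B) (t : ℝ) :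
    IntegrableOn (fun s => Real.exp (F s)) (Iic t) := by
  refine ((integrableOn_exp_mul_Iic hm t).const_mul (Real.exp B)).mono'
    (by fun_prop : Continuous fun s => Real.exp (F s)).aestronglyMeasurable ?_
  refine Eventually.of_forall fun s => ?_
  rw [Real.norm_of_nonneg (Real.exp_pos _).le, ← Real.exp_add]
  exact Real.exp_le_exp.2 (by linarith [hFB s])

end PeriodicPrimitive

section Glue

variable {E : Type*} [NormedAddCommGroup E] {u w : ℝ → E} {a s b : ℝ}

lemma intervalIntegrable_ite (has : a ≤ s) (hsb : s ≤ b)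
    (hu : IntervalIntegrable u volume a s) (hw : IntervalIntegrable w volume s b) :
    IntervalIntegrable (fun τ => if τ ≤ s then u τ else w τ) volume a b := by
  refine IntervalIntegrable.trans (b := s) ((intervalIntegrable_congr fun τ hτ => ?_).2 hu)
    ((intervalIntegrable_congr fun τ hτ => ?_).2 hw)
  · rw [uIoc_of_le has] at hτ
    exact if_pos hτ.2
  · rw [uIoc_of_le hsb] at hτ
    exact if_neg (not_le.2 hτ.1)

lemma integral_ite [NormedSpace ℝ E] (has : a ≤ s) (hsb : s ≤ b)
    (hu : IntervalIntegrable u volume a s) (hw : IntervalIntegrable w volume s b) :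
    ∫ τ in a..b, (if τ ≤ s then u τ else w τ) = (∫ τ in a..s, u τ) + ∫ τ in s..b, w τ := by
  rw [← intervalIntegral.integral_add_adjacent_intervals
    (intervalIntegrable_ite has le_rfl hu (by simp)) (intervalIntegrable_ite le_rfl hsb (by simp) hw)]
  congr 1
  · refine intervalIntegral.integral_congr_ae (Eventually.of_forall fun τ hτ => ?_)
    rw [uIoc_of_le has] at hτ
    exact if_pos hτ.2
  · refine intervalIntegral.integral_congr_ae (Eventually.of_forall fun τ hτ => ?_)
    rw [uIoc_of_le hsb] at hτ
    exact if_neg (not_le.2 hτ.1)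

lemma integrableOn_Iic_ite (hsb : s ≤ b) (hu : IntegrableOn u (Iic s))
    (hw : IntervalIntegrable w volume s b) :
    IntegrableOn (fun τ => if τ ≤ s then u τ else w τ) (Iic b) := by
  rw [← Iic_union_Ioc_eq_Iic hsb, integrableOn_union]
  refine ⟨hu.congr_fun (fun τ hτ => (if_pos hτ).symm) measurableSet_Iic, ?_⟩
  exact ((intervalIntegrable_iff_integrableOn_Ioc_of_le hsb).1 hw).congr_fun
    (fun τ hτ => (if_neg (not_le.2 hτ.1)).symm) measurableSet_Ioc

lemma setIntegral_Iic_ite [NormedSpace ℝ E] (hsb : s ≤ b) (hu : IntegrableOn u (Iic s))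
    (hw : IntervalIntegrable w volume s b) :
    ∫ τ in Iic b, (if τ ≤ s then u τ else w τ) = (∫ τ in Iic s, u τ) + ∫ τ in s..b, w τ := by
  have hg := integrableOn_Iic_ite hsb hu hw
  rw [← sub_add_cancel (∫ τ in Iic b, _) (∫ τ in Iic s, if τ ≤ s then u τ else w τ),
    intervalIntegral.integral_Iic_sub_Iic (hg.mono_set (Iic_subset_Iic.2 hsb)) hg, add_comm]
  congr 1
  · exact setIntegral_congr_fun measurableSet_Iic fun τ hτ => if_pos (mem_Iic.1 hτ)
  · refine intervalIntegral.integral_congr_ae (Eventually.of_forall fun τ hτ => ?_)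
    rw [uIoc_of_le hsb] at hτ
    exact if_neg (not_le.2 hτ.1)

end Glue

section AbsolutelyContinuous

variable {n : ℕ} {γ γ' : ℝ → Evec n} {S T : Set ℝ}

lemma ACOn.mono (h : ACOn γ γ' S) (hTS : T ⊆ S) : ACOn γ γ' T :=
  fun a ha b hb => h a (hTS ha) b (hTS hb)

lemma ACOn.add_const (h : ACOn γ γ' S) (c : Evec n) : ACOn (fun τ => γ τ + c) γ' S := by
  intro a ha b hb
  obtain ⟨hi, he⟩ := h a ha b hb
  exact ⟨hi, by simp only [he]; abel⟩

lemma acOn_of_eq_add_integral {c : ℝ}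
    (h : ∀ b ∈ S, IntervalIntegrable γ' volume c b ∧ γ b = γ c + ∫ τ in c..b, γ' τ) :
    ACOn γ γ' S := by
  intro a ha b hb
  obtain ⟨hia, hea⟩ := h a ha
  obtain ⟨hib, heb⟩ := h b hb
  refine ⟨hia.symm.trans hib, ?_⟩
  rw [heb, hea, ← intervalIntegral.integral_interval_sub_left hib hia]
  abel

lemma acOn_affine (x w : Evec n) (a : ℝ) (S : Set ℝ) :
    ACOn (fun τ => x + (τ - a) • w) (fun _ => w) S := by
  refine fun s _ t _ => ⟨intervalIntegrable_const, ?_⟩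
  rw [intervalIntegral.integral_const]
  module

lemma ACOn.glue {s t : ℝ} {ξ ξ' η η' : ℝ → Evec n} (hξ : ACOn ξ ξ' (Iic s))
    (hη : ACOn η η' (Icc s t)) (hs : ξ s = η s) :
    ACOn (fun τ => if τ ≤ s then ξ τ else η τ) (fun τ => if τ ≤ s then ξ' τ else η' τ)
      (Iic t) := by
  refine acOn_of_eq_add_integral (c := s) fun b hb => ?_
  rcases le_or_gt b s with hbs | hsb
  · have hEq : EqOn (fun τ => if τ ≤ s then ξ' τ else η' τ) ξ' (Ι s b) := fun τ hτ => by
      rw [uIoc_of_ge hbs] at hτ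
      exact if_pos hτ.2
    obtain ⟨hi, he⟩ := hξ s (mem_Iic.2 le_rfl) b hbs
    refine ⟨(intervalIntegrable_congr hEq).2 hi, ?_⟩
    rw [intervalIntegral.integral_congr_ae (Eventually.of_forall hEq), if_pos hbs, if_pos le_rfl]
    exact he
  · have hEq : EqOn (fun τ => if τ ≤ s then ξ' τ else η' τ) η' (Ι s b) := fun τ hτ => by
      rw [uIoc_of_le hsb.le] at hτ
      exact if_neg (not_le.2 hτ.1)
    obtain ⟨hi, he⟩ := hη s ⟨le_rfl, hsb.le.trans hb⟩ b ⟨hsb.le, hb⟩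
    refine ⟨(intervalIntegrable_congr hEq).2 hi, ?_⟩
    rw [intervalIntegral.integral_congr_ae (Eventually.of_forall hEq), if_neg (not_le.2 hsb),
      if_pos le_rfl, hs]
    exact he

end AbsolutelyContinuous

section UnitCube

variable {n : ℕ}

def unitCube (n : ℕ) : Set (Evec n) := {y | ∀ i, y i ∈ Icc (0:ℝ) 1}

lemma zero_mem_unitCube : (0 : Evec n) ∈ unitCube n := fun _ => by simp

lemma isCompact_unitCube : IsCompact (unitCube n) := by
  have : unitCube n = (EuclideanSpace.equiv (Fin n) ℝ) ⁻¹' univ.pi fun _ => Icc 0 1 := by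
    ext y
    simp only [mem_preimage, mem_univ_pi]
    rfl
  rw [this]
  exact (EuclideanSpace.equiv (Fin n) ℝ).toHomeomorph.isCompact_preimage.2
    (isCompact_univ_pi fun _ => isCompact_Icc)

lemma intVec_zero : (intVec 0 : Evec n) = 0 := by
  ext i
  simp [intVec]

lemma intVec_neg (k : Fin n → ℤ) : intVec (-k) = -intVec k := by
  ext i
  simp [intVec]

lemma exists_add_intVec_mem_unitCube (x : Evec n) : ∃ k, x + intVec k ∈ unitCube n := by
  refine ⟨fun i => -⌊x i⌋, fun i => ?_⟩
  have h : (x + intVec fun i => -⌊x i⌋) i = Int.fract (x i) := by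
    simp [intVec, Int.fract, sub_eq_add_neg]
  rw [h]
  exact ⟨Int.fract_nonneg _, (Int.fract_lt_one _).le⟩

lemma exists_forall_le_of_periodic {L : Evec n → Evec n → ℝ → ℝ}
    (hLc : Continuous fun q : Evec n × Evec n × ℝ => L q.1 q.2.1 q.2.2)
    (hLx : ∀ (k : Fin n → ℤ) (x v : Evec n) (t : ℝ), L (x + intVec k) v t = L x v t)
    (hLt : ∀ (x v : Evec n) (t : ℝ), L x v (t + 1) = L x v t)
    {K : Set (Evec n)} (hK : IsCompact K) :
    ∃ M, ∀ x, ∀ v ∈ K, ∀ t, L x v t ≤ M := by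
  obtain ⟨M, hM⟩ := ((isCompact_unitCube.prod (hK.prod isCompact_Icc)).image hLc).bddAbove
  refine ⟨M, fun x v hv t => ?_⟩
  obtain ⟨k, hk⟩ := exists_add_intVec_mem_unitCube x
  obtain ⟨t', ht', hLt'⟩ := Function.Periodic.exists_mem_Ico₀ (c := 1)
    (fun t => hLt (x + intVec k) v t) one_pos t
  rw [← hLx k, hLt']
  exact hM ⟨(x + intVec k, v, t'), ⟨hk, hv, Ico_subset_Icc_self ht'⟩, rfl⟩

end UnitCube

section Action

variable {n : ℕ} (F : ℝ → ℝ) (L : Evec n → Evec n → ℝ → ℝ) (α : ℝ)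

def actionDensity (η η' : ℝ → Evec n) (τ : ℝ) : ℝ :=
  Real.exp (F τ) * (L (η τ) (η' τ) τ + α)

def valueSet (x : Evec n) (t : ℝ) : Set ℝ :=
  { v | ∃ ξ ξ' : ℝ → Evec n, ACOn ξ ξ' (Iic t) ∧ ξ t = x ∧
      IntegrableOn (actionDensity F L α ξ ξ') (Iic t) ∧
      v = ∫ s in Iic t, actionDensity F L α ξ ξ' s }

def competitorActions (γ : ℝ → Evec n) (a b : ℝ) : Set ℝ :=
  { r | ∃ η η' : ℝ → Evec n, ACOn η η' (Icc a b) ∧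
      (∃ k : Fin n → ℤ, η a = γ a + intVec k) ∧ (∃ k : Fin n → ℤ, η b = γ b + intVec k) ∧
      IntervalIntegrable (actionDensity F L α η η') volume a b ∧
      r = ∫ τ in a..b, actionDensity F L α η η' τ }

def IsCalibrated (γ γ' : ℝ → Evec n) : Prop :=
  ∀ t₁ t₂ : ℝ, t₁ ≤ t₂ → sInf (valueSet F L α (γ t₂) t₂) - sInf (valueSet F L α (γ t₁) t₁) =
    ∫ τ in t₁..t₂, actionDensity F L α γ γ' τ

def IsMinimizing (γ γ' : ℝ → Evec n) : Prop :=
  ∀ a b : ℝ, a < b →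
    ∫ τ in a..b, actionDensity F L α γ γ' τ = sInf (competitorActions F L α γ a b)

variable {F L α}

lemma exp_smul_wkSet (x : Evec n) (t : ℝ) :
    Real.exp (F t) • wkSet F L α x t = valueSet F L α x t := by
  have hdens : ∀ ξ ξ' : ℝ → Evec n,
      (fun s => Real.exp (F s - F t) * (L (ξ s) (ξ' s) s + α)) =
        fun s => Real.exp (-F t) * actionDensity F L α ξ ξ' s := fun ξ ξ' => by
    ext s
    rw [actionDensity, ← mul_assoc, ← Real.exp_add, neg_add_eq_sub]
  have hcancel : ∀ r : ℝ, Real.exp (F t) * (Real.exp (-F t) * r) = r := fun r => by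
    rw [← mul_assoc, ← Real.exp_add, add_neg_cancel, Real.exp_zero, one_mul]
  ext v
  simp only [mem_smul_set, wkSet, valueSet, hdens, IntegrableOn,
    integrable_const_mul_iff (Real.exp_pos (-F t)).ne'.isUnit, integral_const_mul, smul_eq_mul]
  constructor
  · rintro ⟨_, ⟨ξ, ξ', hac, hx, hint, rfl⟩, rfl⟩
    exact ⟨ξ, ξ', hac, hx, hint, hcancel _⟩
  · rintro ⟨ξ, ξ', hac, hx, hint, rfl⟩
    exact ⟨_, ⟨ξ, ξ', hac, hx, hint, rfl⟩, hcancel _⟩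

lemma exp_mul_uWK (x : Evec n) (t : ℝ) :
    Real.exp (F t) * uWK F L α x t = sInf (valueSet F L α x t) := by
  rw [uWK, ← smul_eq_mul, ← Real.sInf_smul_of_nonneg (Real.exp_pos _).le, exp_smul_wkSet]

lemma actionDensity_ite (s : ℝ) (ξ ξ' η η' : ℝ → Evec n) :
    actionDensity F L α (fun τ => if τ ≤ s then ξ τ else η τ)
        (fun τ => if τ ≤ s then ξ' τ else η' τ) =
      fun τ => if τ ≤ s then actionDensity F L α ξ ξ' τ else actionDensity F L α η η' τ := by
  ext τ
  simp only [actionDensity]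
  split_ifs <;> rfl

lemma actionDensity_add_intVec
    (hL : ∀ (k : Fin n → ℤ) (x v : Evec n) (t : ℝ), L (x + intVec k) v t = L x v t)
    (k : Fin n → ℤ) (ξ ξ' : ℝ → Evec n) :
    actionDensity F L α (fun s => ξ s + intVec k) ξ' = actionDensity F L α ξ ξ' := by
  ext s
  simp only [actionDensity, hL]

lemma valueSet_subset_add_intVec
    (hL : ∀ (k : Fin n → ℤ) (x v : Evec n) (t : ℝ), L (x + intVec k) v t = L x v t)
    (k : Fin n → ℤ) (x : Evec n) (t : ℝ) :
    valueSet F L α x t ⊆ valueSet F L α (x + intVec k) t := by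
  rintro v ⟨ξ, ξ', hac, rfl, hint, rfl⟩
  exact ⟨fun s => ξ s + intVec k, ξ', hac.add_const _, rfl,
    by rwa [actionDensity_add_intVec hL], by rw [actionDensity_add_intVec hL]⟩

lemma valueSet_add_intVec
    (hL : ∀ (k : Fin n → ℤ) (x v : Evec n) (t : ℝ), L (x + intVec k) v t = L x v t)
    (k : Fin n → ℤ) (x : Evec n) (t : ℝ) :
    valueSet F L α (x + intVec k) t = valueSet F L α x t := by
  refine Subset.antisymm ?_ (valueSet_subset_add_intVec hL k x t)
  simpa [intVec_neg] using valueSet_subset_add_intVec hL (-k) (x + intVec k) t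

lemma add_integral_mem_valueSet {s t v : ℝ} (hst : s ≤ t) {η η' : ℝ → Evec n}
    (hv : v ∈ valueSet F L α (η s) s) (hη : ACOn η η' (Icc s t))
    (hint : IntervalIntegrable (actionDensity F L α η η') volume s t) :
    v + ∫ τ in s..t, actionDensity F L α η η' τ ∈ valueSet F L α (η t) t := by
  obtain ⟨ξ, ξ', hξ, hξs, hξint, rfl⟩ := hv
  refine ⟨_, _, hξ.glue hη hξs, ?_, ?_, ?_⟩
  · rcases hst.eq_or_lt with rfl | hlt
    · simpa using hξs
    · exact if_neg (not_le.2 hlt)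
  · rw [actionDensity_ite]
    exact integrableOn_Iic_ite hst hξint hint
  · rw [actionDensity_ite, setIntegral_Iic_ite hst hξint hint]

lemma sInf_valueSet_le_add_integral {s t : ℝ} (hst : s ≤ t) {η η' : ℝ → Evec n}
    (hne : (valueSet F L α (η s) s).Nonempty) (hbdd : BddBelow (valueSet F L α (η t) t))
    (hη : ACOn η η' (Icc s t)) (hint : IntervalIntegrable (actionDensity F L α η η') volume s t) :
    sInf (valueSet F L α (η t) t) ≤
      sInf (valueSet F L α (η s) s) + ∫ τ in s..t, actionDensity F L α η η' τ := by
  rw [← sub_le_iff_le_add]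
  exact le_csInf hne fun v hv =>
    sub_le_iff_le_add.2 (csInf_le hbdd (add_integral_mem_valueSet hst hv hη hint))

lemma sInf_valueSet_add_integral_le {s t : ℝ} (hst : s ≤ t) {ξ ξ' : ℝ → Evec n}
    (hbdd : BddBelow (valueSet F L α (ξ s) s)) (hξ : ACOn ξ ξ' (Iic t))
    (hint : IntegrableOn (actionDensity F L α ξ ξ') (Iic t)) :
    sInf (valueSet F L α (ξ s) s) + ∫ τ in s..t, actionDensity F L α ξ ξ' τ ≤
      ∫ τ in Iic t, actionDensity F L α ξ ξ' τ := by
  have hints := hint.mono_set (Iic_subset_Iic.2 hst)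
  have hmem : ∫ τ in Iic s, actionDensity F L α ξ ξ' τ ∈ valueSet F L α (ξ s) s :=
    ⟨ξ, ξ', hξ.mono (Iic_subset_Iic.2 hst), rfl, hints, rfl⟩
  rw [← intervalIntegral.integral_Iic_sub_Iic hints hint]
  linarith [csInf_le hbdd hmem]

end Action

section Bounds

variable {n : ℕ} {F : ℝ → ℝ} {L : Evec n → Evec n → ℝ → ℝ} {α c M : ℝ}

lemma continuous_actionDensity (hFc : Continuous F)
    (hLc : Continuous fun q : Evec n × Evec n × ℝ => L q.1 q.2.1 q.2.2)
    {η η' : ℝ → Evec n} (hη : Continuous η) (hη' : Continuous η') :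
    Continuous (actionDensity F L α η η') :=
  (Real.continuous_exp.comp hFc).mul
    ((hLc.comp (hη.prodMk (hη'.prodMk continuous_id))).add continuous_const)

lemma mul_exp_le_actionDensity {η η' : ℝ → Evec n} {τ : ℝ} (h : c ≤ L (η τ) (η' τ) τ) :
    (c + α) * Real.exp (F τ) ≤ actionDensity F L α η η' τ := by
  rw [actionDensity, mul_comm]
  gcongr

lemma actionDensity_le_mul_exp {η η' : ℝ → Evec n} {τ : ℝ} (h : L (η τ) (η' τ) τ ≤ M) :
    actionDensity F L α η η' τ ≤ (M + α) * Real.exp (F τ) := by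
  rw [actionDensity, mul_comm]
  gcongr

lemma mul_integral_exp_le_of_mem_valueSet {x : Evec n} {t v : ℝ}
    (hFint : IntegrableOn (fun s => Real.exp (F s)) (Iic t)) (hc : ∀ x v t, c ≤ L x v t)
    (hv : v ∈ valueSet F L α x t) :
    (c + α) * ∫ s in Iic t, Real.exp (F s) ≤ v := by
  obtain ⟨ξ, ξ', -, -, hint, rfl⟩ := hv
  rw [← integral_const_mul]
  exact setIntegral_mono_on (hFint.const_mul _) hint measurableSet_Iic
    fun s _ => mul_exp_le_actionDensity (hc _ _ _)

lemma mul_integral_exp_le_of_mem_competitorActions {γ : ℝ → Evec n} {a b r : ℝ} (hab : a ≤ b)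
    (hFc : Continuous F) (hc : ∀ x v t, c ≤ L x v t) (hr : r ∈ competitorActions F L α γ a b) :
    (c + α) * ∫ s in a..b, Real.exp (F s) ≤ r := by
  obtain ⟨η, η', -, -, -, hint, rfl⟩ := hr
  rw [← intervalIntegral.integral_const_mul]
  exact intervalIntegral.integral_mono_on hab
    ((Real.continuous_exp.comp hFc).intervalIntegrable _ _ |>.const_mul _) hint
    fun s _ => mul_exp_le_actionDensity (hc _ _ _)

lemma exists_mem_valueSet_le (hFc : Continuous F)
    (hFint : ∀ t, IntegrableOn (fun s => Real.exp (F s)) (Iic t))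
    (hLc : Continuous fun q : Evec n × Evec n × ℝ => L q.1 q.2.1 q.2.2)
    (hc : ∀ x v t, c ≤ L x v t) (hM : ∀ x, ∀ v ∈ unitCube n, ∀ t, L x v t ≤ M)
    (x : Evec n) (t : ℝ) :
    ∃ v ∈ valueSet F L α x t, v ≤ (M + α) * ∫ s in Iic t, Real.exp (F s) := by
  set D := actionDensity F L α (fun _ => x) (fun _ => 0)
  have hDle : ∀ s, D s ≤ (M + α) * Real.exp (F s) := fun s =>
    actionDensity_le_mul_exp (hM x 0 zero_mem_unitCube s)
  have hDint : IntegrableOn D (Iic t) :=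
    integrable_of_le_of_le
      (continuous_actionDensity hFc hLc continuous_const continuous_const).aestronglyMeasurable
      (Eventually.of_forall fun s => mul_exp_le_actionDensity (hc x 0 s)) (Eventually.of_forall hDle)
      ((hFint t).const_mul _) ((hFint t).const_mul _)
  refine ⟨_, ⟨fun _ => x, fun _ => 0, fun _ _ _ _ => ⟨intervalIntegrable_const, by simp⟩, rfl,
    hDint, rfl⟩, ?_⟩
  rw [← integral_const_mul]
  exact setIntegral_mono_on hDint ((hFint t).const_mul _) measurableSet_Iic fun s _ => hDle s

lemma bddBelow_valueSet (hFint : ∀ t, IntegrableOn (fun s => Real.exp (F s)) (Iic t))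
    (hc : ∀ x v t, c ≤ L x v t) (x : Evec n) (t : ℝ) : BddBelow (valueSet F L α x t) :=
  ⟨_, fun _ hv => mul_integral_exp_le_of_mem_valueSet (hFint t) hc hv⟩

lemma valueSet_nonempty (hFc : Continuous F)
    (hFint : ∀ t, IntegrableOn (fun s => Real.exp (F s)) (Iic t))
    (hLc : Continuous fun q : Evec n × Evec n × ℝ => L q.1 q.2.1 q.2.2)
    (hc : ∀ x v t, c ≤ L x v t) (hM : ∀ x, ∀ v ∈ unitCube n, ∀ t, L x v t ≤ M)
    (x : Evec n) (t : ℝ) : (valueSet F L α x t).Nonempty :=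
  (exists_mem_valueSet_le hFc hFint hLc hc hM x t).imp fun _ h => h.1

lemma exists_mem_competitorActions_le (hFc : Continuous F)
    (hLc : Continuous fun q : Evec n × Evec n × ℝ => L q.1 q.2.1 q.2.2)
    (hM : ∀ x, ∀ v ∈ unitCube n, ∀ t, L x v t ≤ M) {γ ξ ξ' : ℝ → Evec n} {a b : ℝ}
    (hab : a + 1 ≤ b) (hξ : ACOn ξ ξ' (Iic b)) (hξb : ξ b = γ b)
    (hξint : IntegrableOn (actionDensity F L α ξ ξ') (Iic b)) :
    ∃ r ∈ competitorActions F L α γ a b,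
      r ≤ (M + α) * (∫ s in a..a + 1, Real.exp (F s)) +
        ∫ τ in a + 1..b, actionDensity F L α ξ ξ' τ := by
  -- a unit-time straight segment from `γ a` modulo `ℤⁿ` to `ξ (a + 1)`, then `ξ`
  obtain ⟨k, hk⟩ := exists_add_intVec_mem_unitCube (ξ (a + 1) - γ a)
  set w := ξ (a + 1) - γ a + intVec k
  set β : ℝ → Evec n := fun τ => γ a + intVec (-k) + (τ - a) • w
  have hβ : ACOn β (fun _ => w) (Iic (a + 1)) := acOn_affine _ _ _ _
  have hβ₁ : β (a + 1) = ξ (a + 1) := by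
    simp only [β, w, intVec_neg, add_sub_cancel_left, one_smul]
    abel
  have hβint : IntervalIntegrable (actionDensity F L α β fun _ => w) volume a (a + 1) :=
    (continuous_actionDensity hFc hLc (by fun_prop) continuous_const).intervalIntegrable _ _
  have hξint' : IntervalIntegrable (actionDensity F L α ξ ξ') volume (a + 1) b :=
    (intervalIntegrable_iff_integrableOn_Ioc_of_le hab).2 (hξint.mono_set Ioc_subset_Iic_self)
  have ha : a ≤ a + 1 := by linarith
  refine ⟨_, ⟨_, _, (hβ.glue (hξ.mono Icc_subset_Iic_self) hβ₁).mono Icc_subset_Iic_self,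
    ⟨-k, if_pos ha |>.trans (by simp [β])⟩, ⟨0, ?_⟩, ?_, rfl⟩, ?_⟩
  · rw [intVec_zero, add_zero, ← hξb]
    split_ifs with h
    · obtain rfl := le_antisymm h hab
      exact hβ₁
    · rfl
  · rw [actionDensity_ite]
    exact intervalIntegrable_ite ha hab hβint hξint'
  · rw [actionDensity_ite, integral_ite ha hab hβint hξint', ← intervalIntegral.integral_const_mul]
    gcongr
    exact intervalIntegral.integral_mono_on ha hβint
      ((Real.continuous_exp.comp hFc).intervalIntegrable _ _ |>.const_mul _)
      fun s _ => actionDensity_le_mul_exp (hM _ _ hk _)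

end Bounds

section Calibration

variable {n : ℕ} {F : ℝ → ℝ} {L : Evec n → Evec n → ℝ → ℝ} {α c M : ℝ} {γ γ' : ℝ → Evec n}

theorem IsCalibrated.isMinimizing (hne : ∀ x t, (valueSet F L α x t).Nonempty)
    (hbdd : ∀ x t, BddBelow (valueSet F L α x t))
    (hL : ∀ (k : Fin n → ℤ) (x v : Evec n) (t : ℝ), L (x + intVec k) v t = L x v t)
    (hγ : ACOn γ γ' univ) (hγint : ∀ a b, IntervalIntegrable (actionDensity F L α γ γ') volume a b)
    (hcal : IsCalibrated F L α γ γ') : IsMinimizing F L α γ γ' := by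
  intro a b hab
  have hself (y : Evec n) : ∃ k : Fin n → ℤ, y = y + intVec k :=
    ⟨0, by rw [intVec_zero, add_zero]⟩
  have hγmem : ∫ τ in a..b, actionDensity F L α γ γ' τ ∈ competitorActions F L α γ a b :=
    ⟨γ, γ', hγ.mono (subset_univ _), hself _, hself _, hγint a b, rfl⟩
  refine (IsLeast.csInf_eq ⟨hγmem, ?_⟩).symm
  rintro _ ⟨η, η', hη, ⟨k₁, hk₁⟩, ⟨k₂, hk₂⟩, hint, rfl⟩
  have h := sInf_valueSet_le_add_integral hab.le (hne _ _) (hbdd _ _) hη hint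
  rw [hk₁, hk₂, valueSet_add_intVec hL, valueSet_add_intVec hL] at h
  linarith [hcal a b hab.le]

lemma sInf_valueSet_add_integral_le_add_of_minimizing (hFc : Continuous F)
    (hFint : ∀ t, IntegrableOn (fun s => Real.exp (F s)) (Iic t))
    (hLc : Continuous fun q : Evec n × Evec n × ℝ => L q.1 q.2.1 q.2.2)
    (hc : ∀ x v t, c ≤ L x v t) (hM : ∀ x, ∀ v ∈ unitCube n, ∀ t, L x v t ≤ M)
    (hγ : ACOn γ γ' univ) (hγint : ∀ a b, IntervalIntegrable (actionDensity F L α γ γ') volume a b)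
    {a t₁ t₂ : ℝ} (ha : a + 1 ≤ t₁) (h12 : t₁ ≤ t₂)
    (hmin : ∫ τ in a..t₂, actionDensity F L α γ γ' τ = sInf (competitorActions F L α γ a t₂))
    {ξ ξ' : ℝ → Evec n} (hξ : ACOn ξ ξ' (Iic t₂)) (hξt : ξ t₂ = γ t₂)
    (hξint : IntegrableOn (actionDensity F L α ξ ξ') (Iic t₂)) :
    sInf (valueSet F L α (γ t₁) t₁) + ∫ τ in t₁..t₂, actionDensity F L α γ γ' τ ≤
      (∫ τ in Iic t₂, actionDensity F L α ξ ξ' τ) + (M - c) * ∫ s in Iic (a + 1), Real.exp (F s) := by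
  have hne := valueSet_nonempty (α := α) hFc hFint hLc hc hM
  have hbdd := bddBelow_valueSet (α := α) (L := L) hFint hc
  obtain ⟨r, hr, hrle⟩ := exists_mem_competitorActions_le hFc hLc hM (ha.trans h12) hξ hξt hξint
  have hdpγ := sInf_valueSet_le_add_integral (by linarith) (hne _ _) (hbdd _ _)
    (hγ.mono (subset_univ _)) (hγint a t₁)
  have hbddC : BddBelow (competitorActions F L α γ a t₂) :=
    ⟨_, fun _ hr' => mul_integral_exp_le_of_mem_competitorActions (by linarith) hFc hc hr'⟩
  have hminr : ∫ τ in a..t₂, actionDensity F L α γ γ' τ ≤ r := hmin ▸ csInf_le hbddC hr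
  have hdpξ := sInf_valueSet_add_integral_le (ha.trans h12) (hbdd _ _) hξ hξint
  obtain ⟨v, hv, hvle⟩ := exists_mem_valueSet_le (α := α) hFc hFint hLc hc hM (γ a) a
  have hVγ := (csInf_le (hbdd _ _) hv).trans hvle
  have hVξ := le_csInf (hne (ξ (a + 1)) (a + 1))
    fun _ hv' => mul_integral_exp_le_of_mem_valueSet (hFint (a + 1)) hc hv'
  have hsplit := intervalIntegral.integral_add_adjacent_intervals (hγint a t₁) (hγint t₁ t₂)
  have hexp : ∫ s in a..a + 1, Real.exp (F s) =
      (∫ s in Iic (a + 1), Real.exp (F s)) - ∫ s in Iic a, Real.exp (F s) :=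
    (intervalIntegral.integral_Iic_sub_Iic (hFint a) (hFint (a + 1))).symm
  rw [hexp] at hrle
  linarith

theorem IsMinimizing.isCalibrated (hFc : Continuous F)
    (hFint : ∀ t, IntegrableOn (fun s => Real.exp (F s)) (Iic t))
    (hLc : Continuous fun q : Evec n × Evec n × ℝ => L q.1 q.2.1 q.2.2)
    (hc : ∀ x v t, c ≤ L x v t) (hM : ∀ x, ∀ v ∈ unitCube n, ∀ t, L x v t ≤ M)
    (hγ : ACOn γ γ' univ) (hγint : ∀ a b, IntervalIntegrable (actionDensity F L α γ γ') volume a b)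
    (hmin : IsMinimizing F L α γ γ') : IsCalibrated F L α γ γ' := by
  intro t₁ t₂ h12
  have hne := valueSet_nonempty (α := α) hFc hFint hLc hc hM
  have hbdd := bddBelow_valueSet (α := α) (L := L) hFint hc
  refine le_antisymm (sub_le_iff_le_add'.2 ?_) (le_sub_iff_add_le'.2 ?_)
  · exact sInf_valueSet_le_add_integral h12 (hne _ _) (hbdd _ _) (hγ.mono (subset_univ _))
      (hγint t₁ t₂)
  refine le_csInf (hne _ _) ?_
  rintro _ ⟨ξ, ξ', hξ, hξt, hξint, rfl⟩
  have hlim : Tendsto (fun a => (∫ τ in Iic t₂, actionDensity F L α ξ ξ' τ) +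
      (M - c) * ∫ s in Iic (a + 1), Real.exp (F s)) atBot
      (𝓝 (∫ τ in Iic t₂, actionDensity F L α ξ ξ' τ)) := by
    simpa using tendsto_const_nhds.add ((tendsto_integral_Iic_zero
      (tendsto_atBot_add_const_right _ 1 tendsto_id)).const_mul (M - c))
  refine ge_of_tendsto hlim ((eventually_le_atBot (t₁ - 1)).mono fun a ha => ?_)
  exact sInf_valueSet_add_integral_le_add_of_minimizing hFc hFint hLc hc hM hγ hγint
    (by linarith) h12 (hmin a t₂ (by linarith)) hξ hξt hξint

theorem isCalibrated_iff_isMinimizing (hFc : Continuous F)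
    (hFint : ∀ t, IntegrableOn (fun s => Real.exp (F s)) (Iic t))
    (hLc : Continuous fun q : Evec n × Evec n × ℝ => L q.1 q.2.1 q.2.2)
    (hc : ∀ x v t, c ≤ L x v t) (hM : ∀ x, ∀ v ∈ unitCube n, ∀ t, L x v t ≤ M)
    (hL : ∀ (k : Fin n → ℤ) (x v : Evec n) (t : ℝ), L (x + intVec k) v t = L x v t)
    (hγ : ACOn γ γ' univ) (hγint : ∀ a b, IntervalIntegrable (actionDensity F L α γ γ') volume a b) :
    IsCalibrated F L α γ γ' ↔ IsMinimizing F L α γ γ' :=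
  ⟨(·.isMinimizing (valueSet_nonempty hFc hFint hLc hc hM) (bddBelow_valueSet hFint hc) hL hγ hγint),
    (·.isCalibrated hFc hFint hLc hc hM hγ hγint)⟩

end Calibration

theorem globally_calibrated_iff_minimizing_general
    (n : ℕ)
    (f F : ℝ → ℝ)
    (hf : Continuous f) (hfper : ∀ t, f (t + 1) = f t)
    (hfmean : 0 < ∫ t in (0:ℝ)..1, f t)
    (hF : ∀ t, F t = ∫ τ in (0:ℝ)..t, f τ)
    (L : Evec n → Evec n → ℝ → ℝ)
    (hLsm : ContDiff ℝ 2 (fun q : Evec n × Evec n × ℝ => L q.1 q.2.1 q.2.2))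
    (hLxper : ∀ (k : Fin n → ℤ) (x v : Evec n) (t : ℝ), L (x + intVec k) v t = L x v t)
    (hLtper : ∀ (x v : Evec n) (t : ℝ), L x v (t + 1) = L x v t)
    (hLsuper : ∀ k : ℝ, 0 ≤ k → ∃ C : ℝ, ∀ x v t, k * ‖v‖ - C ≤ L x v t)
    (α : ℝ) (γ γ' : ℝ → Evec n)
    (hγ : ACOn γ γ' Set.univ)
    (hγint : ∀ a b : ℝ, IntervalIntegrable
      (fun τ => Real.exp (F τ) * (L (γ τ) (γ' τ) τ + α)) MeasureTheory.volume a b) :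
    (∀ t₁ t₂ : ℝ, t₁ ≤ t₂ →
        Real.exp (F t₂) * uWK F L α (γ t₂) t₂ - Real.exp (F t₁) * uWK F L α (γ t₁) t₁ =
          ∫ τ in t₁..t₂, Real.exp (F τ) * (L (γ τ) (γ' τ) τ + α)) ↔
    (∀ a b : ℝ, a < b →
        (∫ τ in a..b, Real.exp (F τ) * (L (γ τ) (γ' τ) τ + α)) =
          sInf { r | ∃ η η' : ℝ → Evec n, ACOn η η' (Set.Icc a b) ∧
            (∃ k : Fin n → ℤ, η a = γ a + intVec k) ∧
            (∃ k : Fin n → ℤ, η b = γ b + intVec k) ∧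
            IntervalIntegrable (fun τ => Real.exp (F τ) * (L (η τ) (η' τ) τ + α))
              MeasureTheory.volume a b ∧
            r = ∫ τ in a..b, Real.exp (F τ) * (L (η τ) (η' τ) τ + α) }) := by
  have hFc : Continuous F := by
    rw [funext hF]
    exact intervalIntegral.continuous_primitive hf.intervalIntegrable 0
  obtain ⟨B, hB⟩ := exists_primitive_le_mean_mul_add hf hfper one_ne_zero
  rw [div_one] at hB
  have hFint := integrableOn_exp_Iic_of_le_mul_add hfmean hFc fun s => (hF s).trans_le (hB s)
  have hLc := hLsm.continuous
  obtain ⟨C, hC⟩ := hLsuper 0 le_rfl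
  obtain ⟨M, hM⟩ := exists_forall_le_of_periodic hLc hLxper hLtper isCompact_unitCube
  simp only [exp_mul_uWK]
  exact isCalibrated_iff_isMinimizing hFc hFint hLc (c := -C) (fun x v t => by simpa using hC x v t)
    hM hLxper hγ hγint

/-- An absolutely continuous curve `γ : ℝ → ℝⁿ` (with
locally integrable action) is globally calibrated by `u_α⁻` if and only if on
every interval `[a,b]` it minimizes the action among absolutely continuous
curves whose endpoints agree with those of `γ` modulo `ℤⁿ`. -/
theorem globally_calibrated_iff_minimizing
    (n : ℕ) (hn : 1 ≤ n)
    (f F : ℝ → ℝ)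
    (hf : Continuous f) (hfper : ∀ t, f (t + 1) = f t)
    (hfmean : 0 < ∫ t in (0:ℝ)..1, f t)
    (hF : ∀ t, F t = ∫ τ in (0:ℝ)..t, f τ)
    (L : Evec n → Evec n → ℝ → ℝ)
    (hLsm : ContDiff ℝ 2 (fun q : Evec n × Evec n × ℝ => L q.1 q.2.1 q.2.2))
    (hLxper : ∀ (k : Fin n → ℤ) (x v : Evec n) (t : ℝ), L (x + intVec k) v t = L x v t)
    (hLtper : ∀ (x v : Evec n) (t : ℝ), L x v (t + 1) = L x v t)
    (hLconv : ∀ (x : Evec n) (t : ℝ) (v w : Evec n), w ≠ 0 →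
      0 < iteratedFDeriv ℝ 2 (fun v' => L x v' t) v ![w, w])
    (hLsuper : ∀ k : ℝ, 0 ≤ k → ∃ C : ℝ, ∀ x v t, k * ‖v‖ - C ≤ L x v t)
    (hcomp : ∀ (x₀ v₀ : Evec n) (t₀ : ℝ), ∃ γ : ℝ → Evec n,
      ContDiff ℝ 2 γ ∧ γ t₀ = x₀ ∧ deriv γ t₀ = v₀ ∧
      ∀ t : ℝ, HasDerivAt
        (fun σ => fderiv ℝ (fun v => L (γ σ) v σ) (deriv γ σ))
        (fderiv ℝ (fun y => L y (deriv γ t) t) (γ t)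
          - f t • fderiv ℝ (fun v => L (γ t) v t) (deriv γ t)) t)
    (α : ℝ) (γ γ' : ℝ → Evec n)
    (hγ : ACOn γ γ' Set.univ)
    (hγint : ∀ a b : ℝ, IntervalIntegrable
      (fun τ => Real.exp (F τ) * (L (γ τ) (γ' τ) τ + α)) MeasureTheory.volume a b) :
    (∀ t₁ t₂ : ℝ, t₁ ≤ t₂ →
        Real.exp (F t₂) * uWK F L α (γ t₂) t₂ - Real.exp (F t₁) * uWK F L α (γ t₁) t₁ =
          ∫ τ in t₁..t₂, Real.exp (F τ) * (L (γ τ) (γ' τ) τ + α)) ↔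
    (∀ a b : ℝ, a < b →
        (∫ τ in a..b, Real.exp (F τ) * (L (γ τ) (γ' τ) τ + α)) =
          sInf { r | ∃ η η' : ℝ → Evec n, ACOn η η' (Set.Icc a b) ∧
            (∃ k : Fin n → ℤ, η a = γ a + intVec k) ∧
            (∃ k : Fin n → ℤ, η b = γ b + intVec k) ∧
            IntervalIntegrable (fun τ => Real.exp (F τ) * (L (η τ) (η' τ) τ + α))
              MeasureTheory.volume a b ∧
            r = ∫ τ in a..b, Real.exp (F τ) * (L (η τ) (η' τ) τ + α) }) :=
  globally_calibrated_iff_minimizing_general n f F hf hfper hfmean hF L hLsm hLxper hLtper hLsuper α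
    γ γ' hγ hγint
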